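/- In the two-player two-color endgame, at the beginning of every turn, any two consecutive chips in a pile of length at least 2 have different colors; equivalently, every pile on the board is an alternating sequence of colors. -/
import Mathlib


/-!  A model of the two-player, two-color endgame of *So Long Sucker*.

The two remaining players are Blue and Red, identified with their colors.
A pile is a finite sequence of chips (head = top chip).  A game state
records the board, the number of chips of each color held by each player,
and the active player. -/

/-- The two chip colors (also naming the two remaining players). -/
inductive Color : Type
  | b : Color
  | r : Color
deriving DecidableEq, Repr

/-- The opponent's color. -/
def Color.other : Color → Color
  | Color.b => Color.r
  | Color.r => Color.b

/-- A pile of chips; the head of the list is the top chip. -/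
abbrev Pile := List Color

/-- A game state: the board (a list of piles), the chip counts
`chips p c` = number of `c`-colored chips held by player `p`,
and the active player. -/
structure GState where
  board : List Pile
  chips : Color → Color → ℕ
  active : Color

/-- Total number of chips in player `p`'s possession. -/
def totalChips (s : GState) (p : Color) : ℕ :=
  s.chips p Color.b + s.chips p Color.r

/-- The Next Player Rule in the two-player, two-color endgame, as a function
of the pile played on (before the placement) and the color of the placed
chip: if the placement triggers a capture, the capturing player moves next;
otherwise the player of the other color than the placed chip moves next
(this is the unique player allowed by the Next Player Rule). -/
def nextActive (π : Pile) (c : Color) : Color :=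
  if π.head? = some c then c else c.other

/-- Placement of a chip of color `c` on pile number `i` by the active
player, with the Capture Rule and Next Player Rule applied. -/
inductive PlaceOn (i : ℕ) : GState → GState → Prop
  | noCapture (s : GState) (c : Color)
      (hi : i < s.board.length)
      (hc : 0 < s.chips s.active c)
      (hcap : (s.board.getD i []).head? ≠ some c) :
      PlaceOn i s
        { board := s.board.set i (c :: s.board.getD i []),
          chips := fun p x =>
            s.chips p x - (if p = s.active ∧ x = c then 1 else 0),
          active := c.other }
  | capture (s : GState) (c : Color) (d : Color)
      (hi : i < s.board.length)
      (hc : 0 < s.chips s.active c)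
      (hcap : (s.board.getD i []).head? = some c)
      (hd : d ∈ c :: s.board.getD i []) :
      PlaceOn i s
        { board := s.board.set i [],
          chips := fun p x =>
            (s.chips p x - (if p = s.active ∧ x = c then 1 else 0))
              + (if p = c then
                  (c :: s.board.getD i []).count x - (if d = x then 1 else 0)
                 else 0),
          active := c }

/-- One legal move of the active player: placing a chip on some pile
(resolving captures), discarding a prisoner, or donating a prisoner
to the opponent. -/
inductive Step : GState → GState → Prop
  | place (i : ℕ) (s s' : GState) (h : PlaceOn i s s') : Step s s'
  | discardPrisoner (s : GState)
      (hc : 0 < s.chips s.active s.active.other) :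
      Step s
        { board := s.board,
          chips := fun p x =>
            s.chips p x - (if p = s.active ∧ x = s.active.other then 1 else 0),
          active := s.active }
  | donatePrisoner (s : GState)
      (hc : 0 < s.chips s.active s.active.other) :
      Step s
        { board := s.board,
          chips := fun p x =>
            if x = s.active.other then
              (if p = s.active then s.chips p x - 1 else s.chips p x + 1)
            else s.chips p x,
          active := s.active }

/-- Player `p` has a winning strategy from state `s`: either the opponent is
to move with no chips (and `p` refuses to donate), so the opponent is
eliminated and `p` wins; or it is `p`'s turn and some move of `p` leads to a
winning position; or it is the opponent's turn and every move of the opponent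
leads to a position winning for `p`. -/
inductive WinsFor (p : Color) : GState → Prop
  | elim (s : GState) (h : s.active ≠ p) (h0 : totalChips s s.active = 0) :
      WinsFor p s
  | mine (s s' : GState) (h : s.active = p) (hs : Step s s')
      (hw : WinsFor p s') : WinsFor p s
  | theirs (s : GState) (h : s.active ≠ p) (h0 : 0 < totalChips s s.active)
      (hw : ∀ s', Step s s' → WinsFor p s') : WinsFor p s

/-- The index of the pile on which strategy `S` places its guard:
the longest pile whose top chip has the opponent's color `q`,
or an empty pile if there is no `q`-pile. -/
def targetIdx (q : Color) (l : List Pile) : ℕ :=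
  let opp := l.filter (fun π => π.head? == some q)
  if opp.isEmpty then
    l.findIdx (fun π => π.isEmpty)
  else
    l.findIdx (fun π =>
      (π.head? == some q) &&
        (π.length == (opp.map List.length).foldr Nat.max 0))

/-- The state resulting from the active player `p` playing one full round of
strategy `S`: capture every `p`-pile (discarding an opponent chip from a
captured pile when it contains one, and a `p` chip otherwise), discard all
prisoners, and finally place one guard on the longest opponent-colored pile,
or on an empty pile if there is none.  The turn then passes to the
opponent. -/
def SRound (s : GState) : GState :=
  let p := s.active
  let q := p.other
  let capt := s.board.filter (fun π => π.head? == some p)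
  let b1 := s.board.map (fun π => if π.head? == some p then ([] : Pile) else π)
  let g1 := s.chips p p +
      (capt.map (fun π =>
        if π.contains q then π.count p else π.count p - 1)).sum
  let i := targetIdx q b1
  { board := b1.set i (p :: b1.getD i []),
    chips := fun pl x =>
      if pl = p then (if x = p then g1 - 1 else 0) else s.chips pl x,
    active := q }

/-- Player `p` wins by applying strategy `S` at each of `p`'s rounds,
whatever the opponent plays. -/
inductive WinsWithS (p : Color) : GState → Prop
  | elim (s : GState) (h : s.active ≠ p) (h0 : totalChips s s.active = 0) :
      WinsWithS p s
  | mine (s : GState) (h : s.active = p) (hg : 0 < s.chips p p)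
      (hw : WinsWithS p (SRound s)) : WinsWithS p s
  | theirs (s : GState) (h : s.active ≠ p) (h0 : 0 < totalChips s s.active)
      (hw : ∀ s', Step s s' → WinsWithS p s') : WinsWithS p s

/-- Every pile on the board is an alternating sequence of colors. -/
def Alternating (l : List Pile) : Prop := ∀ π ∈ l, π.Chain' (· ≠ ·)

/-- The long piles (length at least 2) whose top chip has color `c`. -/
def longPiles (c : Color) (l : List Pile) : List Pile :=
  l.filter (fun π => decide (2 ≤ π.length) && (π.head? == some c))

/-- The sum, over all long `c`-piles, of the number of `c` chips they
contain (e.g. `Σᵢ |ρᵢ|_r` for `c = r`). -/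
def longSum (c : Color) (l : List Pile) : ℕ :=
  ((longPiles c l).map (fun π => π.count c)).sum

/-- The maximum, over all long `c`-piles, of the number of `c` chips they
contain (`0` if there is no long `c`-pile). -/
def longMax (c : Color) (l : List Pile) : ℕ :=
  ((longPiles c l).map (fun π => π.count c)).foldr Nat.max 0

/-- The total number of chips in the game (in hands and on the board). -/
def chipCount (s : GState) : ℕ :=
  totalChips s Color.b + totalChips s Color.r + (s.board.map List.length).sum

/-- **Alternating piles invariant.**  In the two-player, two-color endgame,
any legal move preserves the property that every pile on the board is an
alternating sequence of colors; hence at the beginning of every turn any two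
consecutive chips of any pile are of different colors. -/
theorem alternating_invariant (s s' : GState) (h : Step s s')
    (ha : Alternating s.board) : Alternating s'.board := by
  cases h with
  | place i s s' hp =>
    cases hp with
    | noCapture c hi hc hcap =>
      intro π hπ
      rcases List.mem_or_eq_of_mem_set hπ with hm | he
      · exact ha π hm
      · subst he
        have hold : s.board.getD i [] ∈ s.board := by
          rw [List.getD_eq_getElem _ _ hi]
          exact List.getElem_mem hi
        refine List.isChain_cons.2 ⟨?_, ha _ hold⟩
        intro b hb
        intro hcb
        apply hcap
        subst hcb
        exact hb
    | capture c d hi hc hcap hd =>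
      intro π hπ
      rcases List.mem_or_eq_of_mem_set hπ with hm | he
      · exact ha π hm
      · subst he; exact List.isChain_nil
  | discardPrisoner hc => exact ha
  | donatePrisoner hc => exact ha
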